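/- arXiv:2109.12669 — 3 statements merged into one kernel-verified Lean document; each statement's English description precedes it below -/
import Mathlib

section
/- Let Λ ⊂ ℂ be a subgroup with the property that for all z₁, z₂ ∈ Λ, if z₁ and z₂ are linearly dependent over ℝ then they are linearly dependent over ℚ. Then every subgroup H ⊂ Λ containing three elements that are linearly independent over ℚ is dense in ℂ. Moreover, every coset x + H of such a subgroup is dense in ℂ. -/
open Metric Filter Topology

private lemma triple_coeffs {a b c : ℂ} (hind : LinearIndependent ℚ ![a, b, c])
    (s t r : ℚ) (h : s • a + t • b + r • c = 0) : s = 0 ∧ t = 0 ∧ r = 0 := by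
  have h2 := Fintype.linearIndependent_iff.mp hind ![s, t, r] (by
    simpa [Fin.sum_univ_three] using h)
  exact ⟨h2 0, h2 1, h2 2⟩

private lemma triple_coeffs_int {a b c : ℂ} (hind : LinearIndependent ℚ ![a, b, c])
    (s t r : ℤ) (h : s • a + t • b + r • c = 0) : s = 0 ∧ t = 0 ∧ r = 0 := by
  have h' : (s : ℚ) • a + (t : ℚ) • b + (r : ℚ) • c = 0 := by
    rw [Int.cast_smul_eq_zsmul, Int.cast_smul_eq_zsmul, Int.cast_smul_eq_zsmul]; exact h
  have := triple_coeffs hind _ _ _ h'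
  exact ⟨by exact_mod_cast this.1, by exact_mod_cast this.2.1, by exact_mod_cast this.2.2⟩

private lemma exists_small (H : AddSubgroup ℂ) {a b c : ℂ} (ha : a ∈ H) (hb : b ∈ H)
    (hc : c ∈ H) (hind : LinearIndependent ℚ ![a, b, c]) {α β : ℝ}
    (hcab : α • a + β • b = c) :
    ∀ ε > 0, ∃ γ ∈ H, γ ≠ 0 ∧ ‖γ‖ < ε := by
  intro ε hε
  set g : ℕ → ℂ := fun n =>
    (n : ℤ) • c - (round ((n : ℝ) * α)) • a - (round ((n : ℝ) * β)) • b with hg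
  have hgH : ∀ n, g n ∈ H := fun n =>
    H.sub_mem (H.sub_mem (AddSubgroup.zsmul_mem H hc _) (AddSubgroup.zsmul_mem H ha _))
      (AddSubgroup.zsmul_mem H hb _)
  have hgeq : ∀ n, g n = ((n : ℝ) * α - round ((n : ℝ) * α)) • a
      + ((n : ℝ) * β - round ((n : ℝ) * β)) • b := by
    intro n
    rw [hg]
    simp only
    rw [← hcab, ← Int.cast_smul_eq_zsmul ℝ (n : ℤ), ← Int.cast_smul_eq_zsmul ℝ (round ((n : ℝ) * α)),
      ← Int.cast_smul_eq_zsmul ℝ (round ((n : ℝ) * β))]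
    push_cast
    module
  have hbound : ∀ n, g n ∈ closedBall (0 : ℂ) ((‖a‖ + ‖b‖) / 2) := by
    intro n
    rw [mem_closedBall_zero_iff, hgeq n]
    refine le_trans (norm_add_le _ _) ?_
    rw [norm_smul, norm_smul]
    have h1 := abs_sub_round ((n : ℝ) * α)
    have h2 := abs_sub_round ((n : ℝ) * β)
    have e1 : ‖(n : ℝ) * α - round ((n : ℝ) * α)‖ = |(n : ℝ) * α - round ((n : ℝ) * α)| :=
      Real.norm_eq_abs _
    have e2 : ‖(n : ℝ) * β - round ((n : ℝ) * β)‖ = |(n : ℝ) * β - round ((n : ℝ) * β)| :=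
      Real.norm_eq_abs _
    rw [e1, e2]
    nlinarith [norm_nonneg a, norm_nonneg b, abs_nonneg ((n : ℝ) * α - round ((n : ℝ) * α)),
      abs_nonneg ((n : ℝ) * β - round ((n : ℝ) * β))]
  have hinj : Function.Injective g := by
    intro n m hnm
    have h0 : ((round ((m : ℝ) * α) - round ((n : ℝ) * α) : ℤ)) • a
        + ((round ((m : ℝ) * β) - round ((n : ℝ) * β) : ℤ)) • b + ((n : ℤ) - (m : ℤ)) • c = 0 := by
      have hs : g n - g m = 0 := sub_eq_zero.mpr hnm
      rw [hg] at hs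
      simp only at hs
      rw [sub_smul, sub_smul, sub_smul, ← hs]
      abel
    have h3 := (triple_coeffs_int hind _ _ _ h0).2.2
    omega
  obtain ⟨L, -, φ, hφ, hconv⟩ := (isCompact_closedBall (0 : ℂ) _).tendsto_subseq hbound
  have hcs := hconv.cauchySeq
  rw [Metric.cauchySeq_iff] at hcs
  obtain ⟨N, hN⟩ := hcs ε hε
  refine ⟨g (φ (N + 1)) - g (φ N), H.sub_mem (hgH _) (hgH _), ?_, ?_⟩
  · rw [sub_ne_zero]
    intro h
    exact Nat.succ_ne_self N (hφ.injective (hinj h))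
  · have := hN (N + 1) (Nat.le_succ N) N le_rfl
    simpa [dist_eq_norm] using this

theorem stmt_10 (Λ : AddSubgroup ℂ)
    (hΛ : ∀ z₁ ∈ Λ, ∀ z₂ ∈ Λ,
      ¬LinearIndependent ℝ ![z₁, z₂] → ¬LinearIndependent ℚ ![z₁, z₂])
    (H : AddSubgroup ℂ) (hH : H ≤ Λ)
    (a b c : ℂ) (ha : a ∈ H) (hb : b ∈ H) (hc : c ∈ H)
    (hind : LinearIndependent ℚ ![a, b, c]) :
    Dense (H : Set ℂ) ∧ ∀ x : ℂ, Dense ((fun h => x + h) '' (H : Set ℂ)) := by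
  -- ℝ-linear independence of a, b
  have hab : LinearIndependent ℝ ![a, b] := by
    by_contra hdep
    refine hΛ a (hH ha) b (hH hb) hdep ?_
    rw [LinearIndependent.pair_iff]
    intro s t hst
    have := triple_coeffs hind s t 0 (by rw [zero_smul, add_zero]; exact hst)
    exact ⟨this.1, this.2.1⟩
  -- coordinates of c
  have hcard : Fintype.card (Fin 2) = Module.finrank ℝ ℂ := by
    simp [Complex.finrank_real_complex]
  have hsp := hab.span_eq_top_of_card_eq_finrank hcard
  have hcmem : c ∈ Submodule.span ℝ (Set.range ![a, b]) := by rw [hsp]; trivial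
  have hrange : Set.range ![a, b] = {a, b} := by
    simp only [Matrix.range_cons, Matrix.range_empty, Set.union_empty, Set.union_singleton]
    exact Set.pair_comm b a
  obtain ⟨α, β, hcab⟩ := Submodule.mem_span_pair.mp (by rwa [hrange] at hcmem)
  -- small nonzero elements of H
  have hsmall := exists_small H ha hb hc hind hcab
  -- a sequence of small nonzero elements
  have hseq : ∀ k : ℕ, ∃ γ : ℂ, γ ∈ H ∧ γ ≠ 0 ∧ ‖γ‖ < 1 / (k + 1) := by
    intro k
    obtain ⟨γ, h1, h2, h3⟩ := hsmall (1 / (k + 1)) (by positivity)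
    exact ⟨γ, h1, h2, h3⟩
  choose γ hγH hγ0 hγn using hseq
  have hγpos : ∀ k, 0 < ‖γ k‖ := fun k => norm_pos_iff.mpr (hγ0 k)
  set v : ℕ → ℂ := fun k => (‖γ k‖)⁻¹ • γ k with hv
  have hv1 : ∀ k, ‖v k‖ = 1 := by
    intro k
    rw [hv]
    simp only [norm_smul, norm_inv, norm_norm]
    exact inv_mul_cancel₀ (hγpos k).ne'
  have hvmem : ∀ k, v k ∈ sphere (0 : ℂ) 1 := by
    intro k; rw [mem_sphere_zero_iff_norm]; exact hv1 k
  obtain ⟨u, humem, φ, hφ, hvconv⟩ := (isCompact_sphere (0 : ℂ) 1).tendsto_subseq hvmem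
  have hu1 : ‖u‖ = 1 := mem_sphere_zero_iff_norm.mp humem
  -- the whole line ℝu is in the closure of H
  have hline : ∀ t : ℝ, t • u ∈ closure (H : Set ℂ) := by
    intro t
    have hγφ : ∀ j, γ (φ j) = ‖γ (φ j)‖ • v (φ j) := by
      intro j
      rw [hv]
      simp only
      rw [smul_inv_smul₀ (hγpos (φ j)).ne']
    refine mem_closure_of_tendsto (b := atTop) (f := fun j : ℕ => (round (t / ‖γ (φ j)‖)) • γ (φ j))
      ?_ (Eventually.of_forall fun j => AddSubgroup.zsmul_mem H (hγH _) _)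
    rw [tendsto_iff_norm_sub_tendsto_zero]
    have hbnd : ∀ j, ‖(round (t / ‖γ (φ j)‖)) • γ (φ j) - t • u‖
        ≤ ‖γ (φ j)‖ / 2 + |t| * ‖v (φ j) - u‖ := by
      intro j
      set r := ‖γ (φ j)‖ with hr
      have hrpos : 0 < r := hγpos (φ j)
      have hrw : (round (t / r)) • γ (φ j) = ((round (t / r) : ℝ) * r) • v (φ j) := by
        rw [← Int.cast_smul_eq_zsmul ℝ, hγφ j, smul_smul]
      rw [hrw]
      have step : ((round (t / r) : ℝ) * r) • v (φ j) - t • u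
          = (((round (t / r) : ℝ) * r - t)) • v (φ j) + t • (v (φ j) - u) := by module
      rw [step]
      refine le_trans (norm_add_le _ _) ?_
      have habs : ‖(round (t / r) : ℝ) * r - t‖ ≤ r / 2 := by
        have h1 : (round (t / r) : ℝ) * r - t = ((round (t / r) : ℝ) - t / r) * r := by
          field_simp
        rw [Real.norm_eq_abs, h1, abs_mul, abs_of_pos hrpos]
        have h2 : |(round (t / r) : ℝ) - t / r| ≤ 1 / 2 := by
          rw [abs_sub_comm]; exact abs_sub_round (t / r)
        nlinarith
      have nA : ‖((round (t / r) : ℝ) * r - t) • v (φ j)‖ ≤ r / 2 := by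
        rw [norm_smul, hv1 (φ j), mul_one]; exact habs
      have nB : ‖t • (v (φ j) - u)‖ = |t| * ‖v (φ j) - u‖ := by
        rw [norm_smul, Real.norm_eq_abs]
      linarith
    refine squeeze_zero (fun j => norm_nonneg _) hbnd ?_
    have l1 : Tendsto (fun j : ℕ => ‖γ (φ j)‖ / 2) atTop (𝓝 0) := by
      have hb2 : ∀ j : ℕ, ‖γ (φ j)‖ / 2 ≤ 1 / (j + 1) := by
        intro j
        have h1 : ‖γ (φ j)‖ < 1 / (φ j + 1) := hγn (φ j)
        have h2 : (1 : ℝ) / (φ j + 1) ≤ 1 / (j + 1) := by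
          have hj : (j : ℝ) ≤ φ j := by exact_mod_cast Nat.cast_le.mpr hφ.le_apply
          exact one_div_le_one_div_of_le (by positivity) (by linarith)
        linarith [hγpos (φ j)]
      refine squeeze_zero (fun j => by positivity) hb2 tendsto_one_div_add_atTop_nhds_zero_nat
    have l2 : Tendsto (fun j : ℕ => |t| * ‖v (φ j) - u‖) atTop (𝓝 0) := by
      have := tendsto_iff_norm_sub_tendsto_zero.mp hvconv
      simpa using (this.const_mul |t|)
    simpa using l1.add l2
  -- the functional ψ with kernel ℝu
  have humul : u * (starRingEnd ℂ) u = 1 := by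
    rw [Complex.mul_conj]
    have : Complex.normSq u = 1 := by
      rw [← Complex.sq_norm, hu1]; norm_num
    rw [this]; norm_num
  set ψ : ℂ →+ ℝ := AddMonoidHom.mk' (fun z => ((starRingEnd ℂ) u * z).im)
    (fun x y => by simp [mul_add]) with hψdef
  have hdecomp : ∀ z : ℂ, z = (((starRingEnd ℂ) u * z).re : ℝ) • u
      + (ψ z : ℝ) • (Complex.I * u) := by
    intro z
    have hz : (((starRingEnd ℂ) u * z).re : ℂ) + (((starRingEnd ℂ) u * z).im : ℂ) * Complex.I
        = (starRingEnd ℂ) u * z := Complex.re_add_im _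
    have hψz : (ψ z : ℝ) = ((starRingEnd ℂ) u * z).im := rfl
    calc z = (u * ((starRingEnd ℂ) u)) * z := by rw [humul, one_mul]
      _ = u * ((starRingEnd ℂ) u * z) := by ring
      _ = u * ((((starRingEnd ℂ) u * z).re : ℂ) + (((starRingEnd ℂ) u * z).im : ℂ) * Complex.I) := by
          rw [hz]
      _ = _ := by rw [hψz, Complex.real_smul, Complex.real_smul]; ring
  have hker : ∀ z : ℂ, ψ z = 0 → ∃ s : ℝ, z = s • u := by
    intro z hz
    refine ⟨((starRingEnd ℂ) u * z).re, ?_⟩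
    have := hdecomp z
    rw [hz, zero_smul, add_zero] at this
    exact this
  -- the image subgroup in ℝ
  set S : AddSubgroup ℝ := AddSubgroup.map ψ H with hS
  rcases S.dense_or_cyclic with hdense | ⟨g, hgS⟩
  · -- dense case: H is dense
    set G := H.topologicalClosure with hG
    have hall : ∀ z : ℂ, z ∈ (G : Set ℂ) := by
      intro z
      have hzG : z ∈ closure (G : Set ℂ) := by
        rw [Metric.mem_closure_iff]
        intro ε hε
        have hz : ψ z ∈ closure (S : Set ℝ) := hdense (ψ z)
        obtain ⟨y, hyS, hyd⟩ := Metric.mem_closure_iff.mp hz ε hε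
        obtain ⟨h, hhH, hhy⟩ := AddSubgroup.mem_map.mp hyS
        refine ⟨h + (((starRingEnd ℂ) u * (z - h)).re : ℝ) • u, ?_, ?_⟩
        · refine AddSubgroup.add_mem G (H.le_topologicalClosure hhH) ?_
          rw [← SetLike.mem_coe, hG, AddSubgroup.topologicalClosure_coe]
          exact hline _
        · have hd := hdecomp (z - h)
          have : z - (h + (((starRingEnd ℂ) u * (z - h)).re : ℝ) • u)
              = (ψ (z - h) : ℝ) • (Complex.I * u) := by
            rw [← sub_sub]
            nth_rewrite 1 [hd]
            abel
          rw [dist_eq_norm, this, norm_smul, norm_mul, Complex.norm_I, one_mul, hu1, mul_one]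
          rw [map_sub, hhy]
          rwa [Real.dist_eq] at hyd
      rwa [(AddSubgroup.isClosed_topologicalClosure H).closure_eq] at hzG
    have hDense : Dense (H : Set ℂ) := by
      rw [dense_iff_closure_eq]
      rw [← AddSubgroup.topologicalClosure_coe (s := H)]
      exact Set.eq_univ_of_forall hall
    refine ⟨hDense, ?_⟩
    intro x
    rw [dense_iff_closure_eq]
    apply Set.eq_univ_of_forall
    intro z
    rw [Metric.mem_closure_iff]
    intro ε hε
    obtain ⟨y, hy, hyd⟩ := Metric.mem_closure_iff.mp (hDense (z - x)) ε hε
    refine ⟨x + y, ⟨y, hy, rfl⟩, ?_⟩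
    rw [dist_eq_norm] at hyd ⊢
    have : z - (x + y) = z - x - y := by ring
    rwa [this]
  · -- cyclic case: contradiction
    exfalso
    have hmem : ∀ z ∈ H, ∃ n : ℤ, n • g = ψ z := by
      intro z hz
      have : ψ z ∈ S := AddSubgroup.mem_map.mpr ⟨z, hz, rfl⟩
      rw [hgS] at this
      exact AddSubgroup.mem_closure_singleton.mp this
    obtain ⟨p, hp⟩ := hmem a ha
    obtain ⟨q, hq⟩ := hmem b hb
    obtain ⟨r, hr⟩ := hmem c hc
    -- key: two elements of H in ker ψ are ℚ-dependent
    have key : ∀ z w : ℂ, z ∈ H → w ∈ H → ψ z = 0 → ψ w = 0 →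
        ∃ s t : ℚ, ¬(s = 0 ∧ t = 0) ∧ s • z + t • w = 0 := by
      intro z w hzH hwH hψz hψw
      obtain ⟨s, hs⟩ := hker z hψz
      obtain ⟨t, ht⟩ := hker w hψw
      have hdep : ¬LinearIndependent ℝ ![z, w] := by
        intro hli
        have h0 : t • z + (-s) • w = 0 := by
          rw [hs, ht, smul_smul, smul_smul, neg_mul, mul_comm, neg_smul, add_neg_cancel]
        have h1 := LinearIndependent.pair_iff.mp hli t (-s) h0
        have hz0 : z = 0 := by rw [hs, neg_eq_zero.mp h1.2, zero_smul]
        have := hli.ne_zero 0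
        simp [hz0] at this
      have hnli := hΛ z (hH hzH) w (hH hwH) hdep
      rw [LinearIndependent.pair_iff] at hnli
      push_neg at hnli
      obtain ⟨s', t', h1, h2⟩ := hnli
      exact ⟨s', t', fun h => h2 h.1 h.2, h1⟩
    by_cases hp0 : p = 0
    · have hψa : ψ a = 0 := by rw [← hp, hp0, zero_smul]
      by_cases hq0 : q = 0
      · have hψb : ψ b = 0 := by rw [← hq, hq0, zero_smul]
        obtain ⟨s, t, hst, h0⟩ := key a b ha hb hψa hψb
        have := triple_coeffs hind s t 0 (by rw [zero_smul, add_zero]; exact h0)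
        exact hst ⟨this.1, this.2.1⟩
      · -- w = r•b - q•c
        have hwH : (r • b - q • c : ℂ) ∈ H :=
          H.sub_mem (AddSubgroup.zsmul_mem H hb r) (AddSubgroup.zsmul_mem H hc q)
        have hψw : ψ (r • b - q • c) = 0 := by
          rw [map_sub, map_zsmul, map_zsmul, ← hq, ← hr, smul_smul, smul_smul, mul_comm, sub_self]
        obtain ⟨s, t, hst, h0⟩ := key a _ ha hwH hψa hψw
        have h0' : s • a + (t * (r : ℚ)) • b + (-(t * (q : ℚ))) • c = 0 := by
          have e1 : (r : ℤ) • b = ((r : ℚ)) • b := (Int.cast_smul_eq_zsmul ℚ r b).symm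
          have e2 : (q : ℤ) • c = ((q : ℚ)) • c := (Int.cast_smul_eq_zsmul ℚ q c).symm
          rw [e1, e2] at h0
          rw [← h0]
          module
        have h3 := triple_coeffs hind _ _ _ h0'
        have htq : t * (q : ℚ) = 0 := by linarith [h3.2.2, neg_eq_zero.mp h3.2.2]
        have hqQ : (q : ℚ) ≠ 0 := Int.cast_ne_zero.mpr hq0
        have ht0 : t = 0 := by
          rcases mul_eq_zero.mp htq with h | h
          · exact h
          · exact absurd h hqQ
        exact hst ⟨h3.1, ht0⟩
    · -- z = q•a - p•b, w = r•a - p•c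
      have hzH : (q • a - p • b : ℂ) ∈ H :=
        H.sub_mem (AddSubgroup.zsmul_mem H ha q) (AddSubgroup.zsmul_mem H hb p)
      have hwH : (r • a - p • c : ℂ) ∈ H :=
        H.sub_mem (AddSubgroup.zsmul_mem H ha r) (AddSubgroup.zsmul_mem H hc p)
      have hψz : ψ (q • a - p • b) = 0 := by
        rw [map_sub, map_zsmul, map_zsmul, ← hp, ← hq, smul_smul, smul_smul, mul_comm, sub_self]
      have hψw : ψ (r • a - p • c) = 0 := by
        rw [map_sub, map_zsmul, map_zsmul, ← hp, ← hr, smul_smul, smul_smul, mul_comm, sub_self]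
      obtain ⟨s, t, hst, h0⟩ := key _ _ hzH hwH hψz hψw
      have h0' : (s * (q : ℚ) + t * (r : ℚ)) • a + (-(s * (p : ℚ))) • b
          + (-(t * (p : ℚ))) • c = 0 := by
        have e1 : (q : ℤ) • a = ((q : ℚ)) • a := (Int.cast_smul_eq_zsmul ℚ q a).symm
        have e2 : (p : ℤ) • b = ((p : ℚ)) • b := (Int.cast_smul_eq_zsmul ℚ p b).symm
        have e3 : (r : ℤ) • a = ((r : ℚ)) • a := (Int.cast_smul_eq_zsmul ℚ r a).symm
        have e4 : (p : ℤ) • c = ((p : ℚ)) • c := (Int.cast_smul_eq_zsmul ℚ p c).symm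
        rw [e1, e2, e3, e4] at h0
        rw [← h0]
        module
      have h3 := triple_coeffs hind _ _ _ h0'
      have hpQ : (p : ℚ) ≠ 0 := Int.cast_ne_zero.mpr hp0
      have hs0 : s = 0 := by
        have := neg_eq_zero.mp h3.2.1
        rcases mul_eq_zero.mp this with h | h
        · exact h
        · exact absurd h hpQ
      have ht0 : t = 0 := by
        have := neg_eq_zero.mp h3.2.2
        rcases mul_eq_zero.mp this with h | h
        · exact h
        · exact absurd h hpQ
      exact hst ⟨hs0, ht0⟩
end

section
/- Let T₍₀,₁₎ = {(z, w) ∈ ℂ² : 0 < Im(z̄ w) < 1} and let ~ be any equivalence relation on T₍₀,₁₎ satisfying: (i) (z, w) ~ (z, n z + w) for all (z, w) ∈ T₍₀,₁₎ and n ∈ ℤ; and (ii) (z, w) ~ (−z′ − w, z + w) for all (z, w) ∈ T₍₀,₁₎ and all z′ ∈ ℂ with 0 < z × z′ < 1 − z × w and 0 < z′ × w < z × (z′ + w), where z × w = Im(z̄ w). Then any two elements of T₍₀,₁₎ are equivalent: for all (z, w), (z′, w′) ∈ T₍₀,₁₎, (z, w) ~ (z′, w′). -/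
/-- The cross product on ℂ ≅ ℝ²: `z × w = Im (z̄ w)`. -/
noncomputable def cross (z w : ℂ) : ℝ := ((starRingEnd ℂ) z * w).im

/-- The set `T₍₀,₁₎` of pairs with cross product strictly between 0 and 1. -/
def T01 : Set (ℂ × ℂ) := {p : ℂ × ℂ | 0 < cross p.1 p.2 ∧ cross p.1 p.2 < 1}

lemma cross_eq (z w : ℂ) : cross z w = z.re * w.im - z.im * w.re := by
  simp [cross, Complex.mul_im]; ring

lemma cross_mul_mul (a z w : ℂ) : cross (a*z) (a*w) = Complex.normSq a * cross z w := by
  simp [cross_eq, Complex.mul_re, Complex.mul_im, Complex.normSq_apply]; ring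

lemma cross_ofReal_I (x y : ℝ) : cross ((x:ℝ):ℂ) (Complex.I * ((y:ℝ):ℂ)) = x * y := by
  simp [cross_eq]

lemma mem_T01 {z w : ℂ} (h0 : 0 < cross z w) (h1 : cross z w < 1) : (z, w) ∈ T01 := ⟨h0, h1⟩

lemma isPathConnected_T01 : IsPathConnected T01 := by
  refine ⟨((1:ℂ), Complex.I * ((1/4 : ℝ) : ℂ)), ?_, ?_⟩
  · refine mem_T01 ?_ ?_ <;> rw [show ((1:ℂ)) = (((1:ℝ)):ℂ) by norm_num, cross_ofReal_I] <;> norm_num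
  · rintro ⟨z, w⟩ hp
    have hc0 : 0 < cross z w := hp.1
    have hc1 : cross z w < 1 := hp.2
    have hzne : z ≠ 0 := by rintro rfl; simp [cross_eq] at hc0
    set c : ℝ := cross z w with hc
    refine JoinedIn.symm ?_
    -- Stage 1: scale w so that the cross product becomes 1/4
    set s : ℝ := 1 / (4 * c) with hs
    have hs0 : 0 < s := by positivity
    have hsc : s * c = 1/4 := by rw [hs]; field_simp
    have J1 : JoinedIn T01 (z, w) (z, (s:ℂ) * w) := by
      refine ⟨⟨⟨fun t => (z, (((1:ℝ) + (t:ℝ) * (s - 1) : ℝ) : ℂ) * w), by fun_prop⟩,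
        by norm_num, by norm_num⟩, ?_⟩
      intro t
      obtain ⟨ht0, ht1⟩ := t.2
      show (z, (((1:ℝ) + (t:ℝ) * (s - 1) : ℝ) : ℂ) * w) ∈ T01
      have hcr : cross z ((((1:ℝ) + (t:ℝ) * (s - 1) : ℝ) : ℂ) * w)
          = ((1:ℝ) + (t:ℝ) * (s - 1)) * c := by
        simp [cross_eq, Complex.mul_re, Complex.mul_im, hc]; ring
      refine mem_T01 ?_ ?_ <;> rw [hcr]
      · nlinarith [mul_nonneg ht0 (mul_pos hs0 hc0).le]
      · nlinarith [mul_nonneg ht0 (mul_pos hs0 hc0).le, mul_nonneg ht0 hc0.le]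
    -- Stage 2: rotate both coordinates so the first becomes |z|
    set a : ℝ := ‖z‖ with ha
    have ha0 : 0 < a := by rw [ha]; exact norm_pos_iff.mpr hzne
    set u : ℂ := (a : ℂ) / z with hu
    have huabs : ‖u‖ = 1 := by
      rw [hu, norm_div, Complex.norm_real, Real.norm_of_nonneg ha0.le, ← ha, div_self ha0.ne']
    have hune : u ≠ 0 := by
      intro h; rw [h] at huabs; simp at huabs
    have hnorm1 : ∀ t : unitInterval, Complex.normSq (Complex.exp ((t:ℝ) * Complex.log u)) = 1 := by
      intro t
      rw [Complex.normSq_eq_norm_sq, Complex.norm_exp]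
      have : (((t:ℝ) : ℂ) * Complex.log u).re = (t:ℝ) * Real.log ‖u‖ := by
        simp [Complex.mul_re, Complex.log_re]
      rw [this, huabs, Real.log_one, mul_zero, Real.exp_zero, one_pow]
    have J2 : JoinedIn T01 (z, (s:ℂ)*w) (u * z, u * ((s:ℂ)*w)) := by
      refine ⟨⟨⟨fun t => (Complex.exp ((t:ℝ) * Complex.log u) * z,
          Complex.exp ((t:ℝ) * Complex.log u) * ((s:ℂ)*w)), by fun_prop⟩, ?_, ?_⟩, ?_⟩
      · simp
      · simp [Complex.exp_log hune]
      · intro t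
        show (Complex.exp ((t:ℝ) * Complex.log u) * z,
          Complex.exp ((t:ℝ) * Complex.log u) * ((s:ℂ)*w)) ∈ T01
        have hcr : cross (Complex.exp ((t:ℝ) * Complex.log u) * z)
            (Complex.exp ((t:ℝ) * Complex.log u) * ((s:ℂ)*w)) = 1/4 := by
          rw [cross_mul_mul, hnorm1, one_mul]
          have : cross z ((s:ℂ)*w) = s * c := by
            simp [cross_eq, Complex.mul_re, Complex.mul_im, hc]; ring
          rw [this, hsc]
        refine mem_T01 ?_ ?_ <;> rw [hcr] <;> norm_num
    have huz : u * z = (a:ℂ) := by rw [hu]; field_simp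
    rw [huz] at J2
    set W : ℂ := u * ((s:ℂ)*w) with hWdef
    have hW : a * W.im = 1/4 := by
      have h1 : cross (a:ℂ) W = a * W.im := by simp [cross_eq]
      have h2 : cross ((a:ℂ)) W = 1/4 := by
        rw [← huz, hWdef, cross_mul_mul, Complex.normSq_eq_norm_sq, huabs]
        have : cross z ((s:ℂ)*w) = s * c := by
          simp [cross_eq, Complex.mul_re, Complex.mul_im, hc]; ring
        rw [this, hsc]; norm_num
      linarith [h1, h2]
    have hWim : 0 < W.im := by nlinarith
    -- Stage 3: shear away the real part of W
    have J3 : JoinedIn T01 ((a:ℂ), W) ((a:ℂ), Complex.I * ((W.im : ℝ) : ℂ)) := by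
      refine ⟨⟨⟨fun t => ((a:ℂ), W - (((t:ℝ) * W.re : ℝ) : ℂ)), by fun_prop⟩, ?_, ?_⟩, ?_⟩
      · simp
      · simp only [Set.Icc.coe_one, one_mul]
        refine Prod.ext rfl ?_
        apply Complex.ext <;> simp
      · intro t
        show ((a:ℂ), W - (((t:ℝ) * W.re : ℝ) : ℂ)) ∈ T01
        have hcr : cross (a:ℂ) (W - (((t:ℝ) * W.re : ℝ) : ℂ)) = a * W.im := by
          simp [cross_eq]
        refine mem_T01 ?_ ?_ <;> rw [hcr, hW] <;> norm_num
    -- Stage 4: move along the hyperbola to (1, I/4)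
    have hpos : ∀ t : unitInterval, 0 < (1 - (t:ℝ)) * a + (t:ℝ) := by
      intro t
      have ht0 := t.2.1
      have ht1 := t.2.2
      nlinarith
    have hdivcont : Continuous fun t : unitInterval => (1 / (4 * ((1 - (t:ℝ)) * a + (t:ℝ))) : ℝ) := by
      apply Continuous.div continuous_const (by fun_prop)
      intro t
      have := hpos t
      positivity
    have J4 : JoinedIn T01 ((a:ℂ), Complex.I * ((W.im : ℝ) : ℂ))
        ((1:ℂ), Complex.I * ((1/4 : ℝ) : ℂ)) := by
      refine ⟨⟨⟨fun t => ((((1 - (t:ℝ)) * a + (t:ℝ) : ℝ) : ℂ),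
          Complex.I * ((1 / (4 * ((1 - (t:ℝ)) * a + (t:ℝ))) : ℝ) : ℂ)), ?_⟩, ?_, ?_⟩, ?_⟩
      · exact Continuous.prodMk (by fun_prop) (continuous_const.mul (Complex.continuous_ofReal.comp hdivcont))
      · have hWim4 : W.im = 1 / (4 * a) := by field_simp; linarith [hW]
        simp [hWim4]
      · norm_num
      · intro t
        show ((((1 - (t:ℝ)) * a + (t:ℝ) : ℝ) : ℂ),
          Complex.I * ((1 / (4 * ((1 - (t:ℝ)) * a + (t:ℝ))) : ℝ) : ℂ)) ∈ T01
        have h := hpos t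
        have hcr : cross ((((1 - (t:ℝ)) * a + (t:ℝ) : ℝ)) : ℂ)
            (Complex.I * ((1 / (4 * ((1 - (t:ℝ)) * a + (t:ℝ))) : ℝ) : ℂ)) = 1/4 := by
          rw [cross_ofReal_I]
          field_simp
        refine mem_T01 ?_ ?_ <;> rw [hcr] <;> norm_num
    exact ((J1.trans J2).trans J3).trans J4

lemma continuous_cross2 {α : Type*} [TopologicalSpace α] {f g : α → ℂ}
    (hf : Continuous f) (hg : Continuous g) :
    Continuous fun x => cross (f x) (g x) := by
  simp only [cross_eq]; fun_prop

lemma cross_add_right (z a b : ℂ) : cross z (a + b) = cross z a + cross z b := by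
  simp [cross_eq]; try ring

lemma B_mem {z w z' : ℂ} (h2 : cross z z' < 1 - cross z w)
    (h3 : 0 < cross z' w) (h4 : cross z' w < cross z (z' + w)) :
    (-z' - w, z + w) ∈ T01 := by
  have key : cross (-z' - w) (z + w) = cross z z' + cross z w - cross z' w := by
    simp [cross_eq]; try ring
  rw [cross_add_right] at h4
  refine mem_T01 ?_ ?_ <;> rw [key] <;> linarith

lemma local_open (r : ℂ × ℂ → ℂ × ℂ → Prop)
    (hsymm : ∀ p ∈ T01, ∀ q ∈ T01, r p q → r q p)
    (htrans : ∀ p ∈ T01, ∀ q ∈ T01, ∀ s ∈ T01, r p q → r q s → r p s)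
    (hgen2 : ∀ p ∈ T01, ∀ z' : ℂ,
      0 < cross p.1 z' → cross p.1 z' < 1 - cross p.1 p.2 →
      0 < cross z' p.2 → cross z' p.2 < cross p.1 (z' + p.2) →
      r p (-z' - p.2, p.1 + p.2)) :
    ∀ p ∈ T01, ∃ N : Set (ℂ × ℂ), IsOpen N ∧ p ∈ N ∧ ∀ q ∈ N, q ∈ T01 → r p q := by
  rintro ⟨z, w⟩ hp
  have hc0 : 0 < cross z w := hp.1
  have hc1 : cross z w < 1 := hp.2
  set c : ℝ := cross z w with hc
  set t : ℝ := (1 - c) / 2 with hts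
  have ht0 : 0 < t := by rw [hts]; linarith
  have htc1 : t * c < 1 - c := by nlinarith
  have htc2 : c + t * c < 1 := by nlinarith
  have htc3 : 0 < t * c := mul_pos ht0 hc0
  set T : ℂ := ((t:ℝ):ℂ) with hT
  set z' : ℂ := T * (w + z) with hz'
  set b : ℂ := -T * (z + w) with hb
  refine ⟨{q : ℂ × ℂ |
      (0 < cross (z + w - q.2) (z' + w - q.2) ∧
       cross (z + w - q.2) (z' + w - q.2) < 1 - cross (z + w - q.2) q.2 ∧
       0 < cross (z' + w - q.2) q.2 ∧
       cross (z' + w - q.2) q.2 < cross (z + w - q.2) ((z' + w - q.2) + q.2) ∧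
       0 < cross (z + w - q.2) q.2 ∧
       cross (z + w - q.2) q.2 < 1) ∧
      (0 < cross (q.2 - b) ((T - 1) * (z + w) + q.2) ∧
       cross (q.2 - b) ((T - 1) * (z + w) + q.2) < 1 - cross (q.2 - b) b ∧
       0 < cross ((T - 1) * (z + w) + q.2) b ∧
       cross ((T - 1) * (z + w) + q.2) b < cross (q.2 - b) (((T - 1) * (z + w) + q.2) + b) ∧
       0 < cross (q.2 - b) b ∧
       cross (q.2 - b) b < 1) ∧
      (0 < cross (q.2 - b) (-q.1 + T * (z + w)) ∧
       cross (q.2 - b) (-q.1 + T * (z + w)) < 1 - cross (q.2 - b) b ∧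
       0 < cross (-q.1 + T * (z + w)) b ∧
       cross (-q.1 + T * (z + w)) b < cross (q.2 - b) ((-q.1 + T * (z + w)) + b))},
    ?_, ?_, ?_⟩
  · -- openness
    refine IsOpen.and (IsOpen.and ?_ (IsOpen.and ?_ (IsOpen.and ?_ (IsOpen.and ?_ (IsOpen.and ?_ ?_)))))
      (IsOpen.and (IsOpen.and ?_ (IsOpen.and ?_ (IsOpen.and ?_ (IsOpen.and ?_ (IsOpen.and ?_ ?_)))))
      (IsOpen.and ?_ (IsOpen.and ?_ (IsOpen.and ?_ ?_)))) <;>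
    first
      | exact isOpen_lt continuous_const (continuous_cross2 (by fun_prop) (by fun_prop))
      | exact isOpen_lt (continuous_cross2 (by fun_prop) (by fun_prop)) continuous_const
      | exact isOpen_lt (continuous_cross2 (by fun_prop) (by fun_prop))
          (continuous_const.sub (continuous_cross2 (by fun_prop) (by fun_prop)))
      | exact isOpen_lt (continuous_cross2 (by fun_prop) (by fun_prop))
          (continuous_cross2 (by fun_prop) (by fun_prop))
  · -- the base point belongs to N
    show _ ∧ _ ∧ _
    have e1 : cross (z + w - w) (z' + w - w) = t * c := by
      rw [hz', hT, hc]; simp [cross_eq]; try ring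
    have e2 : cross (z + w - w) w = c := by
      rw [hc]; simp [cross_eq]; try ring
    have e3 : cross (z' + w - w) w = t * c := by
      rw [hz', hT, hc]; simp [cross_eq]; try ring
    have e4 : cross (z + w - w) ((z' + w - w) + w) = c + t * c := by
      rw [hz', hT, hc]; simp [cross_eq]; try ring
    have e7 : cross (w - b) ((T - 1) * (z + w) + w) = c := by
      rw [hb, hT, hc]; simp [cross_eq]; try ring
    have e9 : cross ((T - 1) * (z + w) + w) b = t * c := by
      rw [hb, hT, hc]; simp [cross_eq]; try ring
    have e10 : cross (w - b) (((T - 1) * (z + w) + w) + b) = c + t * c := by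
      rw [hb, hT, hc]; simp [cross_eq]; try ring
    have e11 : cross (w - b) b = t * c := by
      rw [hb, hT, hc]; simp [cross_eq]; try ring
    have e13 : cross (w - b) (-z + T * (z + w)) = c := by
      rw [hb, hT, hc]; simp [cross_eq]; try ring
    have e15 : cross (-z + T * (z + w)) b = t * c := by
      rw [hb, hT, hc]; simp [cross_eq]; try ring
    have e16 : cross (w - b) ((-z + T * (z + w)) + b) = c + t * c := by
      rw [hb, hT, hc]; simp [cross_eq]; try ring
    refine ⟨⟨?_, ?_, ?_, ?_, ?_, ?_⟩, ⟨?_, ?_, ?_, ?_, ?_, ?_⟩, ?_, ?_, ?_, ?_⟩ <;>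
      simp only [e1, e2, e3, e4, e7, e9, e10, e11, e13, e15, e16] <;> linarith
  · -- every point of N ∩ T01 is related to the base point
    rintro ⟨z₁, w₁⟩ ⟨⟨c1, c2, c3, c4, c5, c6⟩, ⟨c7, c8, c9, c10, c11, c12⟩, c13, c14, c15, c16⟩ hq
    -- step I : r (z,w) (-z'-w, z+w)
    have eI1 : cross z z' = t * c := by rw [hz', hT, hc]; simp [cross_eq]; try ring
    have eI3 : cross z' w = t * c := by rw [hz', hT, hc]; simp [cross_eq]; try ring
    have eI4 : cross z (z' + w) = c + t * c := by rw [hz', hT, hc]; simp [cross_eq]; try ring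
    have hI : r (z, w) (-z' - w, z + w) := by
      refine hgen2 (z, w) hp z' ?_ ?_ ?_ ?_ <;>
        simp only [eI1, eI3, eI4] <;> [skip; rw [show cross (z,w).1 (z,w).2 = c from rfl]; skip; skip] <;>
        linarith
    have hp1 : (-z' - w, z + w) ∈ T01 := by
      refine B_mem ?_ ?_ ?_ <;> simp only [eI1, eI3, eI4] <;> linarith
    have hp2 : (z + w - w₁, w₁) ∈ T01 := mem_T01 c5 c6
    have hp3 : (w₁ - b, b) ∈ T01 := mem_T01 c11 c12
    -- step II : r (z+w-w₁, w₁) (-z'-w, z+w)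
    have hII : r (z + w - w₁, w₁) (-z' - w, z + w) := by
      have h := hgen2 (z + w - w₁, w₁) hp2 (z' + w - w₁) c1 c2 c3 c4
      rwa [show (-(z' + w - w₁) - w₁, (z + w - w₁) + w₁) = (-z' - w, z + w) from
        Prod.ext (by ring) (by ring)] at h
    -- step III : r (w₁ - b, b) (z+w-w₁, w₁)
    have hIII : r (w₁ - b, b) (z + w - w₁, w₁) := by
      have h := hgen2 (w₁ - b, b) hp3 ((T - 1) * (z + w) + w₁) c7 c8 c9 c10
      rwa [show (-((T - 1) * (z + w) + w₁) - b, (w₁ - b) + b) = (z + w - w₁, w₁) from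
        Prod.ext (by rw [hb]; ring) (by ring)] at h
    -- step IV : r (w₁ - b, b) (z₁, w₁)
    have hIV : r (w₁ - b, b) (z₁, w₁) := by
      have h := hgen2 (w₁ - b, b) hp3 (-z₁ + T * (z + w)) c13 c14 c15 c16
      rwa [show (-(-z₁ + T * (z + w)) - b, (w₁ - b) + b) = (z₁, w₁) from
        Prod.ext (by rw [hb]; ring) (by ring)] at h
    -- assemble
    have s1 : r (z, w) (z + w - w₁, w₁) :=
      htrans _ hp _ hp1 _ hp2 hI (hsymm _ hp2 _ hp1 hII)
    have s2 : r (z, w) (w₁ - b, b) :=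
      htrans _ hp _ hp2 _ hp3 s1 (hsymm _ hp3 _ hp2 hIII)
    exact htrans _ hp _ hp3 _ hq s2 hIV

theorem stmt_14 (r : ℂ × ℂ → ℂ × ℂ → Prop)
    (hrefl : ∀ p ∈ T01, r p p)
    (hsymm : ∀ p ∈ T01, ∀ q ∈ T01, r p q → r q p)
    (htrans : ∀ p ∈ T01, ∀ q ∈ T01, ∀ s ∈ T01, r p q → r q s → r p s)
    (hgen1 : ∀ p ∈ T01, ∀ n : ℤ, r p (p.1, (n : ℂ) * p.1 + p.2))
    (hgen2 : ∀ p ∈ T01, ∀ z' : ℂ,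
      0 < cross p.1 z' → cross p.1 z' < 1 - cross p.1 p.2 →
      0 < cross z' p.2 → cross z' p.2 < cross p.1 (z' + p.2) →
      r p (-z' - p.2, p.1 + p.2)) :
    ∀ p ∈ T01, ∀ q ∈ T01, r p q := by
  intro p hp q₀ hq₀
  by_contra hr
  choose N hNopen hNmem hNrel using local_open r hsymm htrans hgen2
  set U : Set (ℂ × ℂ) := ⋃ (x : ℂ × ℂ) (h : x ∈ T01 ∧ r p x), N x h.1 with hU
  set V : Set (ℂ × ℂ) := ⋃ (x : ℂ × ℂ) (h : x ∈ T01 ∧ ¬ r p x), N x h.1 with hV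
  have hUopen : IsOpen U := isOpen_iUnion fun x => isOpen_iUnion fun h => hNopen x h.1
  have hVopen : IsOpen V := isOpen_iUnion fun x => isOpen_iUnion fun h => hNopen x h.1
  have hcover : T01 ⊆ U ∪ V := by
    intro x hx
    by_cases h : r p x
    · exact Or.inl (Set.mem_iUnion.2 ⟨x, Set.mem_iUnion.2 ⟨⟨hx, h⟩, hNmem x hx⟩⟩)
    · exact Or.inr (Set.mem_iUnion.2 ⟨x, Set.mem_iUnion.2 ⟨⟨hx, h⟩, hNmem x hx⟩⟩)
  have hUne : (T01 ∩ U).Nonempty :=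
    ⟨p, hp, Set.mem_iUnion.2 ⟨p, Set.mem_iUnion.2 ⟨⟨hp, hrefl p hp⟩, hNmem p hp⟩⟩⟩
  have hVne : (T01 ∩ V).Nonempty :=
    ⟨q₀, hq₀, Set.mem_iUnion.2 ⟨q₀, Set.mem_iUnion.2 ⟨⟨hq₀, hr⟩, hNmem q₀ hq₀⟩⟩⟩
  obtain ⟨x, hxT, hxU, hxV⟩ :=
    isPathConnected_T01.isConnected.isPreconnected U V hUopen hVopen hcover hUne hVne
  obtain ⟨a, haU⟩ := Set.mem_iUnion.1 hxU
  obtain ⟨ha, hxa⟩ := Set.mem_iUnion.1 haU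
  obtain ⟨e, heV⟩ := Set.mem_iUnion.1 hxV
  obtain ⟨he, hxe⟩ := Set.mem_iUnion.1 heV
  have hax : r a x := hNrel a ha.1 x hxa hxT
  have hex : r e x := hNrel e he.1 x hxe hxT
  have hpx : r p x := htrans p hp a ha.1 x hxT ha.2 hax
  have hpe : r p e := htrans p hp x hxT e he.1 hpx (hsymm e he.1 x hxT hex)
  exact he.2 hpe
end

section
/- Let Λ ⊂ ℂ be a subgroup such that ℝ-linearly dependent elements of Λ are ℚ-linearly dependent, let a₁, a₂, a₃ ∈ Λ be linearly independent over ℚ, and let H = ℤa₁ + ℤa₂ + ℤa₃. Then for every w ∈ ℂ and every ε > 0 there exists h ∈ H with |w − h| < ε; moreover, the set Λ₍₀,₁₎ = {(a, b) ∈ H × H : 0 < Im(ā b) < 1} is dense in T₍₀,₁₎ = {(z, w) ∈ ℂ² : 0 < Im(z̄ w) < 1}. -/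
lemma dense_main (Λ : AddSubgroup ℂ)
    (hΛ : ∀ z₁ ∈ Λ, ∀ z₂ ∈ Λ,
      ¬LinearIndependent ℝ ![z₁, z₂] → ¬LinearIndependent ℚ ![z₁, z₂])
    (a₁ a₂ a₃ : ℂ) (h₁ : a₁ ∈ Λ) (h₂ : a₂ ∈ Λ) (h₃ : a₃ ∈ Λ)
    (hind : LinearIndependent ℚ ![a₁, a₂, a₃]) :
    Dense ((AddSubgroup.closure ({a₁, a₂, a₃} : Set ℂ) : AddSubgroup ℂ) : Set ℂ) := by
  set H := AddSubgroup.closure ({a₁, a₂, a₃} : Set ℂ) with hHdef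
  have ha1H : a₁ ∈ H := AddSubgroup.subset_closure (by simp)
  have ha2H : a₂ ∈ H := AddSubgroup.subset_closure (by simp)
  have ha3H : a₃ ∈ H := AddSubgroup.subset_closure (by simp)
  -- rational independence in convenient form
  have hrelQ : ∀ c₁ c₂ c₃ : ℚ, (c₁ : ℂ) * a₁ + (c₂ : ℂ) * a₂ + (c₃ : ℂ) * a₃ = 0 →
      c₁ = 0 ∧ c₂ = 0 ∧ c₃ = 0 := by
    intro c₁ c₂ c₃ h
    have h' : ∑ i, (![c₁, c₂, c₃] i) • (![a₁, a₂, a₃] i) = 0 := by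
      simp only [Fin.sum_univ_three]
      simpa [Rat.smul_def] using h
    have := Fintype.linearIndependent_iff.mp hind ![c₁, c₂, c₃] h'
    exact ⟨this 0, this 1, this 2⟩
  -- real independence of a₁ a₂
  have hQ12 : LinearIndependent ℚ ![a₁, a₂] := by
    rw [LinearIndependent.pair_iff]
    intro s t hst
    have := hrelQ s t 0 (by simpa [Rat.smul_def] using hst)
    exact ⟨this.1, this.2.1⟩
  have hR12 : LinearIndependent ℝ ![a₁, a₂] := by
    by_contra h
    exact hΛ a₁ h₁ a₂ h₂ h hQ12
  -- basis and coordinates of a₃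
  obtain ⟨α, β, ha₃⟩ : ∃ α β : ℝ, a₃ = (α : ℂ) * a₁ + (β : ℂ) * a₂ := by
    let B := basisOfLinearIndependentOfCardEqFinrank hR12
      (by simp [Complex.finrank_real_complex])
    have hB : ⇑B = ![a₁, a₂] := coe_basisOfLinearIndependentOfCardEqFinrank hR12 _
    refine ⟨B.repr a₃ 0, B.repr a₃ 1, ?_⟩
    have := B.sum_repr a₃
    rw [Fin.sum_univ_two, hB] at this
    simp only [Matrix.cons_val_zero, Matrix.cons_val_one, Matrix.head_cons,
      Complex.real_smul] at this
    exact this.symm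
  -- key: no integer relation p α + q β = r except trivial
  have hirr : ∀ p q r : ℤ, (p : ℝ) * α + (q : ℝ) * β = (r : ℝ) → p = 0 ∧ q = 0 := by
    intro p q r hpq
    by_contra hne
    have hC : (p : ℂ) * (α : ℂ) + (q : ℂ) * (β : ℂ) = (r : ℂ) := by
      have := congrArg (fun x : ℝ => (x : ℂ)) hpq
      push_cast at this ⊢
      exact this
    set b₁ : ℂ := (p ^ 2 + q ^ 2) • a₃ - (p * r) • a₁ - (q * r) • a₂ with hb₁
    set b₂ : ℂ := q • a₁ - p • a₂ with hb₂
    have hb₁Λ : b₁ ∈ Λ := by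
      exact Λ.sub_mem (Λ.sub_mem (Λ.zsmul_mem h₃ _) (Λ.zsmul_mem h₁ _)) (Λ.zsmul_mem h₂ _)
    have hb₂Λ : b₂ ∈ Λ := Λ.sub_mem (Λ.zsmul_mem h₁ _) (Λ.zsmul_mem h₂ _)
    have hbt : b₁ = ((q : ℝ) * α - (p : ℝ) * β) • b₂ := by
      simp only [hb₁, hb₂, zsmul_eq_mul, Complex.real_smul, ha₃]
      push_cast
      linear_combination ((p : ℂ) * a₁ + (q : ℂ) * a₂) * hC
    have hdep : ¬LinearIndependent ℝ ![b₁, b₂] := by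
      intro hli
      have := (LinearIndependent.pair_iff.mp hli) 1 (-((q : ℝ) * α - (p : ℝ) * β))
        (by rw [one_smul, neg_smul, ← hbt]; ring)
      exact one_ne_zero this.1
    have hQdep := hΛ b₁ hb₁Λ b₂ hb₂Λ hdep
    rw [LinearIndependent.pair_iff] at hQdep
    push_neg at hQdep
    obtain ⟨s, t, hst, hne2⟩ := hQdep
    have hst' : (s : ℂ) * b₁ + (t : ℂ) * b₂ = 0 := by
      simpa [Rat.smul_def] using hst
    have hco := hrelQ (t * q - s * (p * r)) (-(t * p) - s * (q * r)) (s * (p ^ 2 + q ^ 2)) ?_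
    · have hpq0 : ((p : ℚ)) ^ 2 + ((q : ℚ)) ^ 2 ≠ 0 := by
        intro h
        have hp2 : ((p : ℚ)) ^ 2 = 0 := by nlinarith [sq_nonneg ((p:ℚ)), sq_nonneg ((q:ℚ))]
        have hq2 : ((q : ℚ)) ^ 2 = 0 := by nlinarith [sq_nonneg ((p:ℚ)), sq_nonneg ((q:ℚ))]
        exact hne ⟨by exact_mod_cast pow_eq_zero_iff two_ne_zero |>.mp hp2,
          by exact_mod_cast pow_eq_zero_iff two_ne_zero |>.mp hq2⟩
      have hs0 : s = 0 := by
        rcases mul_eq_zero.mp hco.2.2 with h | h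
        · exact h
        · exact absurd h (by push_cast; push_cast at hpq0; exact hpq0)
      have ht0 : t = 0 := by
        by_contra ht
        have h1 := hco.1
        have h2 := hco.2.1
        rw [hs0] at h1 h2
        have hq0 : (q : ℚ) = 0 := by
          have h : t * (q : ℚ) = 0 := by linear_combination h1
          rcases mul_eq_zero.mp h with h | h
          exacts [absurd h ht, h]
        have hp0 : (p : ℚ) = 0 := by
          have h : t * (p : ℚ) = 0 := by linear_combination -h2
          rcases mul_eq_zero.mp h with h | h
          exacts [absurd h ht, h]
        exact hne ⟨by exact_mod_cast hp0, by exact_mod_cast hq0⟩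
      exact hne2 hs0 ht0
    · simp only [hb₁, hb₂, zsmul_eq_mul] at hst'
      push_cast
      push_cast at hst'
      linear_combination hst'
  -- Step A: nonzero elements of H arbitrarily close to 0
  have hsmall : ∀ ε : ℝ, 0 < ε → ∃ g ∈ H, g ≠ 0 ∧ ‖g‖ < ε := by
    intro ε hε
    obtain ⟨N, hN⟩ := exists_nat_gt ((‖a₁‖ + ‖a₂‖ + 1) / ε)
    have hNpos : 0 < (N : ℝ) := lt_of_le_of_lt (by positivity) hN
    have hN0 : 0 < N := by exact_mod_cast hNpos
    -- pigeonhole on (⌊N * fract (k α)⌋, ⌊N * fract (k β)⌋) for k = 0, ..., N²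
    set F : ℕ → ℤ × ℤ := fun k =>
      (⌊(N : ℝ) * Int.fract ((k : ℝ) * α)⌋, ⌊(N : ℝ) * Int.fract ((k : ℝ) * β)⌋) with hF
    have hmaps : ∀ k ∈ Finset.range (N ^ 2 + 1),
        F k ∈ Finset.Ico (0 : ℤ) N ×ˢ Finset.Ico (0 : ℤ) N := by
      intro k _
      have key : ∀ x : ℝ, ⌊(N : ℝ) * Int.fract x⌋ ∈ Finset.Ico (0 : ℤ) N := by
        intro x
        rw [Finset.mem_Ico]
        constructor
        · exact Int.floor_nonneg.mpr (mul_nonneg hNpos.le (Int.fract_nonneg x))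
        · rw [Int.floor_lt]
          calc (N : ℝ) * Int.fract x < N * 1 :=
                by exact mul_lt_mul_of_pos_left (Int.fract_lt_one x) hNpos
            _ = N := by ring
      exact Finset.mem_product.mpr ⟨key _, key _⟩
    have hcard : (Finset.Ico (0 : ℤ) N ×ˢ Finset.Ico (0 : ℤ) N).card
        < (Finset.range (N ^ 2 + 1)).card := by
      rw [Finset.card_product, Finset.card_range]
      simp only [Int.card_Ico, sub_zero, Int.toNat_natCast]
      nlinarith
    obtain ⟨k₁, _, k₂, _, hkne, hFeq⟩ :=
      Finset.exists_ne_map_eq_of_card_lt_of_maps_to hcard hmaps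
    have happrox : ∀ x : ℝ, ⌊(N : ℝ) * Int.fract ((k₁ : ℝ) * x)⌋ =
        ⌊(N : ℝ) * Int.fract ((k₂ : ℝ) * x)⌋ →
        ∃ m : ℤ, |((k₁ : ℤ) - k₂ : ℝ) * x - m| < 1 / N := by
      intro x hfl
      refine ⟨⌊(k₁ : ℝ) * x⌋ - ⌊(k₂ : ℝ) * x⌋, ?_⟩
      have h1 : |(N : ℝ) * Int.fract ((k₁ : ℝ) * x) - (N : ℝ) * Int.fract ((k₂ : ℝ) * x)| < 1 :=
        Int.abs_sub_lt_one_of_floor_eq_floor hfl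
      have h2 : Int.fract ((k₁ : ℝ) * x) - Int.fract ((k₂ : ℝ) * x)
          = ((k₁ : ℤ) - k₂ : ℝ) * x - ((⌊(k₁ : ℝ) * x⌋ - ⌊(k₂ : ℝ) * x⌋ : ℤ) : ℝ) := by
        rw [Int.fract, Int.fract]
        push_cast
        ring
      rw [← h2]
      rw [← mul_sub, abs_mul, abs_of_pos hNpos] at h1
      rw [lt_div_iff₀ hNpos]
      linarith
    obtain ⟨m, hm⟩ := happrox α (congrArg Prod.fst hFeq)
    obtain ⟨n, hn⟩ := happrox β (congrArg Prod.snd hFeq)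
    set k : ℤ := (k₁ : ℤ) - k₂ with hk
    have hkne0 : k ≠ 0 := sub_ne_zero.mpr (by exact_mod_cast hkne)
    refine ⟨k • a₃ - m • a₁ - n • a₂,
      H.sub_mem (H.sub_mem (H.zsmul_mem ha3H _) (H.zsmul_mem ha1H _)) (H.zsmul_mem ha2H _),
      ?_, ?_⟩
    · intro hg0
      simp only [zsmul_eq_mul] at hg0
      have := hrelQ (-m) (-n) k (by push_cast; push_cast at hg0; linear_combination hg0)
      exact hkne0 (by exact_mod_cast this.2.2)
    · have hgform : (k • a₃ - m • a₁ - n • a₂ : ℂ)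
          = (((k : ℝ) * α - m : ℝ) : ℂ) * a₁ + (((k : ℝ) * β - n : ℝ) : ℂ) * a₂ := by
        simp only [zsmul_eq_mul, ha₃]
        push_cast
        ring
      rw [hgform]
      calc ‖(((k : ℝ) * α - m : ℝ) : ℂ) * a₁ + (((k : ℝ) * β - n : ℝ) : ℂ) * a₂‖
          ≤ ‖(((k : ℝ) * α - m : ℝ) : ℂ) * a₁‖
            + ‖(((k : ℝ) * β - n : ℝ) : ℂ) * a₂‖ := norm_add_le _ _
        _ = |(k : ℝ) * α - m| * ‖a₁‖ + |(k : ℝ) * β - n| * ‖a₂‖ := by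
            rw [norm_mul, norm_mul, Complex.norm_real, Complex.norm_real, Real.norm_eq_abs, Real.norm_eq_abs]
        _ < (1 / N) * (‖a₁‖ + ‖a₂‖ + 1) := by
            have hm' : |(k : ℝ) * α - m| < 1 / N := by
              have e : ((k : ℤ) : ℝ) = ((k₁ : ℤ) : ℝ) - ((k₂ : ℕ) : ℝ) := by
                rw [hk]; push_cast; ring
              rw [e]; exact hm
            have hn' : |(k : ℝ) * β - n| < 1 / N := by
              have e : ((k : ℤ) : ℝ) = ((k₁ : ℤ) : ℝ) - ((k₂ : ℕ) : ℝ) := by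
                rw [hk]; push_cast; ring
              rw [e]; exact hn
            have h1 : (0 : ℝ) ≤ ‖a₁‖ := norm_nonneg _
            have h2 : (0 : ℝ) ≤ ‖a₂‖ := norm_nonneg _
            have h3 : (0 : ℝ) ≤ |(k : ℝ) * α - m| := abs_nonneg _
            have h4 : (0 : ℝ) ≤ |(k : ℝ) * β - n| := abs_nonneg _
            have h5 : (0 : ℝ) < 1 / N := by positivity
            nlinarith
        _ < ε := by
            rw [div_mul_eq_mul_div, div_lt_iff₀ hNpos]
            have h6 : ‖a₁‖ + ‖a₂‖ + 1 < ε * N := by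
              rw [div_lt_iff₀ hε] at hN
              linarith
            linarith
  -- Step B: a line ℝ·v inside the closure of H
  obtain ⟨v, hv1, hvline⟩ : ∃ v : ℂ, ‖v‖ = 1 ∧ ∀ t : ℝ, (t : ℂ) * v ∈ _root_.closure (H : Set ℂ) := by
    have hex : ∀ j : ℕ, ∃ g : ℂ, g ∈ H ∧ g ≠ 0 ∧ ‖g‖ < 1 / (j + 1) := by
      intro j
      obtain ⟨g, hg1, hg2, hg3⟩ := hsmall (1 / (j + 1)) (by positivity)
      exact ⟨g, hg1, hg2, hg3⟩
    choose g hgH hg0 hgs using hex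
    have hgpos : ∀ j, 0 < ‖g j‖ := fun j => by
      simpa [norm_pos_iff] using hg0 j
    set u : ℕ → ℂ := fun j => (((‖g j‖)⁻¹ : ℝ) : ℂ) * g j with hu
    have husph : ∀ j, u j ∈ Metric.sphere (0 : ℂ) 1 := by
      intro j
      have hnorm : ‖u j‖ = 1 := by
        rw [hu]
        rw [norm_mul, Complex.norm_real, Real.norm_eq_abs,
          abs_of_pos (inv_pos.mpr (hgpos j)), inv_mul_cancel₀ (hgpos j).ne']
      simpa [Metric.mem_sphere, dist_zero_right] using hnorm
    obtain ⟨v, hvmem, φ, hφmono, hφlim⟩ :=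
      (isCompact_sphere (0 : ℂ) 1).tendsto_subseq husph
    have hv1 : ‖v‖ = 1 := by simpa [Metric.mem_sphere, dist_zero_right] using hvmem
    refine ⟨v, hv1, fun t => ?_⟩
    have hrlim0 : Filter.Tendsto (fun j => ‖g j‖) Filter.atTop (nhds 0) := by
      apply squeeze_zero (fun j => (hgpos j).le) (fun j => (hgs j).le)
      have h : Filter.Tendsto (fun j : ℕ => ((j : ℝ) + 1)) Filter.atTop Filter.atTop :=
        Filter.tendsto_atTop_add_const_right _ 1 tendsto_natCast_atTop_atTop
      simpa [one_div, Pi.inv_def] using h.inv_tendsto_atTop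
    have hrlim : Filter.Tendsto (fun j => ‖g (φ j)‖) Filter.atTop (nhds 0) :=
      hrlim0.comp hφmono.tendsto_atTop
    have hclim : Filter.Tendsto
        (fun j => (⌊t / ‖g (φ j)‖⌋ : ℝ) * ‖g (φ j)‖)
        Filter.atTop (nhds t) := by
      have hdist : ∀ j, |(⌊t / ‖g (φ j)‖⌋ : ℝ) * ‖g (φ j)‖ - t|
          ≤ ‖g (φ j)‖ := by
        intro j
        set r := ‖g (φ j)‖ with hr
        have hrpos : 0 < r := hgpos _
        have h1 : (⌊t / r⌋ : ℝ) ≤ t / r := Int.floor_le _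
        have h2 : t / r - 1 < ⌊t / r⌋ := by
          have := Int.lt_floor_add_one (t / r)
          linarith [Int.sub_one_lt_floor (t / r)]
        rw [abs_le]
        constructor
        · have : (t / r - 1) * r < (⌊t / r⌋ : ℝ) * r := by
            exact mul_lt_mul_of_pos_right h2 hrpos
          have he : (t / r) * r = t := by field_simp
          nlinarith
        · have : (⌊t / r⌋ : ℝ) * r ≤ (t / r) * r := mul_le_mul_of_nonneg_right h1 hrpos.le
          have he : (t / r) * r = t := by field_simp
          nlinarith
      have h0 : Filter.Tendsto
          (fun j => |(⌊t / ‖g (φ j)‖⌋ : ℝ) * ‖g (φ j)‖ - t|)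
          Filter.atTop (nhds 0) :=
        squeeze_zero (fun j => abs_nonneg _) hdist hrlim
      have h1 := (tendsto_zero_iff_abs_tendsto_zero
        (fun j => (⌊t / ‖g (φ j)‖⌋ : ℝ) * ‖g (φ j)‖ - t)).mpr h0
      have := Filter.Tendsto.add_const t h1
      simpa using this
    have hlim : Filter.Tendsto
        (fun j => (⌊t / ‖g (φ j)‖⌋ • g (φ j) : ℂ)) Filter.atTop (nhds ((t : ℂ) * v)) := by
      have heq : ∀ j, (⌊t / ‖g (φ j)‖⌋ • g (φ j) : ℂ)
          = (((⌊t / ‖g (φ j)‖⌋ : ℝ) * ‖g (φ j)‖ : ℝ) : ℂ) * u (φ j) := by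
        intro j
        have hr0 : (‖g (φ j)‖ : ℂ) ≠ 0 := by
          exact_mod_cast (hgpos (φ j)).ne'
        simp only [hu, zsmul_eq_mul]
        push_cast
        field_simp
      simp only [heq]
      exact ((Complex.continuous_ofReal.tendsto t).comp hclim).mul hφlim
    exact mem_closure_of_tendsto hlim (Filter.Eventually.of_forall fun j => H.zsmul_mem (hgH _) _)
  -- Step C: project along the line and use the 1-dimensional dichotomy
  have hdec : ∀ z : ℂ, z = ((((starRingEnd ℂ) v * z).re : ℝ) : ℂ) * v
      + ((((starRingEnd ℂ) v * z).im : ℝ) : ℂ) * (v * Complex.I) := by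
    intro z
    have h1 : v * (starRingEnd ℂ) v = 1 := by
      rw [Complex.mul_conj]
      norm_cast
      rw [Complex.normSq_eq_norm_sq, hv1]; norm_num
    have h2 : v * ((starRingEnd ℂ) v * z) = z := by rw [← mul_assoc, h1, one_mul]
    conv_lhs => rw [← h2]
    conv_lhs => rw [← Complex.re_add_im ((starRingEnd ℂ) v * z)]
    ring
  set f : ℂ →+ ℝ := AddMonoidHom.mk' (fun z => ((starRingEnd ℂ) v * z).im)
    (fun x y => by simp [mul_add]) with hf
  have hfapp : ∀ z : ℂ, f z = ((starRingEnd ℂ) v * z).im := fun z => rfl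
  set A : AddSubgroup ℝ := AddSubgroup.map f H with hA
  rcases A.dense_or_cyclic with hd | ⟨c, hc⟩
  · -- the projected subgroup is dense: conclude H is dense
    rw [Metric.dense_iff]
    intro w r hr
    have hw : f w ∈ _root_.closure (A : Set ℝ) := hd (f w)
    rw [Metric.mem_closure_iff] at hw
    obtain ⟨sA, hsA, hsdist⟩ := hw (r / 2) (by linarith)
    obtain ⟨h₀, hh₀H, hfh₀⟩ := AddSubgroup.mem_map.mp hsA
    set z := w - h₀ with hz
    have hfz : |f z| < r / 2 := by
      have he : f z = f w - f h₀ := by rw [hz, map_sub]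
      rw [he, hfh₀]
      simpa [Real.dist_eq] using hsdist
    have hxv := hvline (((starRingEnd ℂ) v * z).re)
    rw [Metric.mem_closure_iff] at hxv
    obtain ⟨h₁', hh₁H, hh₁dist⟩ := hxv (r / 2) (by linarith)
    refine ⟨h₀ + h₁', ⟨?_, H.add_mem hh₀H hh₁H⟩⟩
    rw [Metric.mem_ball]
    have hzd := hdec z
    have he2 : dist (h₀ + h₁') w = ‖z - h₁'‖ := by
      rw [Complex.dist_eq, show h₀ + h₁' - w = -(z - h₁') from by rw [hz]; ring,
        norm_neg]
    rw [he2]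
    calc ‖z - h₁'‖
        ≤ ‖z - ((((starRingEnd ℂ) v * z).re : ℝ) : ℂ) * v‖
          + ‖((((starRingEnd ℂ) v * z).re : ℝ) : ℂ) * v - h₁'‖ := by
          have he3 : z - h₁' = (z - ((((starRingEnd ℂ) v * z).re : ℝ) : ℂ) * v)
            + (((((starRingEnd ℂ) v * z).re : ℝ) : ℂ) * v - h₁') := by ring
          rw [he3]; exact norm_add_le _ _
      _ < r / 2 + r / 2 := by
          apply add_lt_add
          · have he4 : z - ((((starRingEnd ℂ) v * z).re : ℝ) : ℂ) * v
                = ((f z : ℝ) : ℂ) * (v * Complex.I) := by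
              rw [hfapp]
              linear_combination hzd
            rw [he4, norm_mul, Complex.norm_real, norm_mul, Complex.norm_I,
              hv1]
            simpa using hfz
          · have he5 := hh₁dist
            rw [Complex.dist_eq] at he5
            exact he5
      _ = r := by ring
  · -- the projected subgroup is cyclic: contradiction with collinearity rigidity
    exfalso
    have hmem : ∀ x ∈ H, ∃ nn : ℤ, nn • c = f x := by
      intro x hx
      have hfx : f x ∈ A := ⟨x, hx, rfl⟩
      rw [hc] at hfx
      exact AddSubgroup.mem_closure_singleton.mp hfx
    obtain ⟨n₁, hn₁⟩ := hmem a₁ ha1H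
    obtain ⟨n₂, hn₂⟩ := hmem a₂ ha2H
    obtain ⟨n₃, hn₃⟩ := hmem a₃ ha3H
    have hker : ∀ z : ℂ, f z = 0 → ∃ x : ℝ, z = (x : ℂ) * v := by
      intro z h0
      refine ⟨((starRingEnd ℂ) v * z).re, ?_⟩
      have hzd := hdec z
      rw [← hfapp, h0] at hzd
      simpa using hzd
    have hnotInd : ∀ z z' : ℂ, f z = 0 → f z' = 0 → ¬LinearIndependent ℝ ![z, z'] := by
      intro z z' h0 h0' hli
      obtain ⟨x, hx⟩ := hker z h0
      obtain ⟨x', hx'⟩ := hker z' h0'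
      have hp := LinearIndependent.pair_iff.mp hli
      have h00 := hp x' (-x) (by rw [hx, hx']; simp only [Complex.real_smul]; push_cast; ring)
      have hz0 : z = 0 := by rw [hx, neg_eq_zero.mp h00.2]; simp
      have hz'0 : z' = 0 := by rw [hx', h00.1]; simp
      have h11 := hp 1 0 (by rw [hz0, hz'0]; simp)
      exact one_ne_zero h11.1
    have hfzero : ∀ (i j : ℤ) (x y : ℂ), i • c = f x → j • c = f y →
        f (j • x - i • y) = 0 := by
      intro i j x y hix hjy
      rw [map_sub, map_zsmul, map_zsmul, ← hix, ← hjy, smul_smul, smul_smul, mul_comm, sub_self]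
    have hext : ∀ z z' : ℂ, z ∈ Λ → z' ∈ Λ → f z = 0 → f z' = 0 →
        ∃ s t : ℚ, ¬(s = 0 ∧ t = 0) ∧ (s : ℂ) * z + (t : ℂ) * z' = 0 := by
      intro z z' hzΛ hz'Λ h0 h0'
      have hQd := hΛ z hzΛ z' hz'Λ (hnotInd z z' h0 h0')
      rw [LinearIndependent.pair_iff] at hQd
      push_neg at hQd
      obtain ⟨s, t, hst, hne⟩ := hQd
      exact ⟨s, t, fun h => hne h.1 h.2, by simpa [Rat.smul_def] using hst⟩
    by_cases hn₁0 : n₁ = 0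
    · by_cases hn₂0 : n₂ = 0
      · have hfa₁ : f a₁ = 0 := by rw [← hn₁, hn₁0, zero_zsmul]
        have hfa₂ : f a₂ = 0 := by rw [← hn₂, hn₂0, zero_zsmul]
        obtain ⟨s, t, hne, hrel2⟩ := hext a₁ a₂ h₁ h₂ hfa₁ hfa₂
        have hco := hrelQ s t 0 (by push_cast; linear_combination hrel2)
        exact hne ⟨hco.1, hco.2.1⟩
      · have hfa₁ : f a₁ = 0 := by rw [← hn₁, hn₁0, zero_zsmul]
        have hfb : f (n₃ • a₂ - n₂ • a₃) = 0 := hfzero n₂ n₃ a₂ a₃ hn₂ hn₃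
        obtain ⟨s, t, hne, hrel2⟩ := hext a₁ _ h₁
          (Λ.sub_mem (Λ.zsmul_mem h₂ _) (Λ.zsmul_mem h₃ _)) hfa₁ hfb
        have hrel3 : ((s : ℚ) : ℂ) * a₁ + ((t * n₃ : ℚ) : ℂ) * a₂
            + ((-(t * n₂) : ℚ) : ℂ) * a₃ = 0 := by
          simp only [zsmul_eq_mul] at hrel2
          push_cast
          push_cast at hrel2
          linear_combination hrel2
        have hco := hrelQ _ _ _ hrel3
        have ht0 : t = 0 := by
          rcases mul_eq_zero.mp (neg_eq_zero.mp hco.2.2) with h | h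
          · exact h
          · exact absurd (by exact_mod_cast h) hn₂0
        exact hne ⟨hco.1, ht0⟩
    · have hb₁ : f (n₂ • a₁ - n₁ • a₂) = 0 := hfzero n₁ n₂ a₁ a₂ hn₁ hn₂
      have hb₂ : f (n₃ • a₁ - n₁ • a₃) = 0 := hfzero n₁ n₃ a₁ a₃ hn₁ hn₃
      obtain ⟨s, t, hne, hrel2⟩ := hext _ _
        (Λ.sub_mem (Λ.zsmul_mem h₁ _) (Λ.zsmul_mem h₂ _))
        (Λ.sub_mem (Λ.zsmul_mem h₁ _) (Λ.zsmul_mem h₃ _)) hb₁ hb₂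
      have hrel3 : ((s * n₂ + t * n₃ : ℚ) : ℂ) * a₁ + ((-(s * n₁) : ℚ) : ℂ) * a₂
          + ((-(t * n₁) : ℚ) : ℂ) * a₃ = 0 := by
        simp only [zsmul_eq_mul] at hrel2
        push_cast
        push_cast at hrel2
        linear_combination hrel2
      have hco := hrelQ _ _ _ hrel3
      have hs0 : s = 0 := by
        rcases mul_eq_zero.mp (neg_eq_zero.mp hco.2.1) with h | h
        exacts [h, absurd (by exact_mod_cast h) hn₁0]
      have ht0 : t = 0 := by
        rcases mul_eq_zero.mp (neg_eq_zero.mp hco.2.2) with h | h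
        exacts [h, absurd (by exact_mod_cast h) hn₁0]
      exact hne ⟨hs0, ht0⟩


theorem stmt_17 (Λ : AddSubgroup ℂ)
    (hΛ : ∀ z₁ ∈ Λ, ∀ z₂ ∈ Λ,
      ¬LinearIndependent ℝ ![z₁, z₂] → ¬LinearIndependent ℚ ![z₁, z₂])
    (a₁ a₂ a₃ : ℂ) (h₁ : a₁ ∈ Λ) (h₂ : a₂ ∈ Λ) (h₃ : a₃ ∈ Λ)
    (hind : LinearIndependent ℚ ![a₁, a₂, a₃])
    (H : AddSubgroup ℂ) (hH : H = AddSubgroup.closure {a₁, a₂, a₃}) :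
    (∀ (w : ℂ) (ε : ℝ), 0 < ε → ∃ h ∈ H, ‖w - h‖ < ε) ∧
      {p : ℂ × ℂ | 0 < cross p.1 p.2 ∧ cross p.1 p.2 < 1} ⊆
        closure {p : ℂ × ℂ | p.1 ∈ H ∧ p.2 ∈ H ∧
          0 < cross p.1 p.2 ∧ cross p.1 p.2 < 1} := by
  subst hH
  have hdense := dense_main Λ hΛ a₁ a₂ a₃ h₁ h₂ h₃ hind
  constructor
  · intro w ε hε
    have hw := hdense w
    rw [Metric.mem_closure_iff] at hw
    obtain ⟨h, hhH, hd⟩ := hw ε hε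
    exact ⟨h, hhH, by rwa [Complex.dist_eq] at hd⟩
  · intro p hp
    rw [mem_closure_iff]
    intro U hU hpU
    have hcont : Continuous fun q : ℂ × ℂ => cross q.1 q.2 := by
      unfold cross
      fun_prop
    have hVopen : IsOpen (U ∩ ((fun q : ℂ × ℂ => cross q.1 q.2) ⁻¹' Set.Ioo 0 1)) :=
      hU.inter (isOpen_Ioo.preimage hcont)
    have hpV : p ∈ U ∩ ((fun q : ℂ × ℂ => cross q.1 q.2) ⁻¹' Set.Ioo 0 1) :=
      ⟨hpU, hp.1, hp.2⟩
    have hd2 : Dense (((AddSubgroup.closure ({a₁, a₂, a₃} : Set ℂ) : AddSubgroup ℂ) : Set ℂ) ×ˢ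
        ((AddSubgroup.closure ({a₁, a₂, a₃} : Set ℂ) : AddSubgroup ℂ) : Set ℂ)) :=
      hdense.prod hdense
    obtain ⟨q, hqHH, hqV⟩ := hd2.exists_mem_open hVopen ⟨p, hpV⟩
    exact ⟨q, hqV.1, hqHH.1, hqHH.2, hqV.2.1, hqV.2.2⟩
end
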